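/- (Anyon–Fermi expansion of the reduced density matrix, ordering $O_+$.) Let $\kappa \in \mathbb{R}$, $L>0$, $V = [-L/2, L/2]$, $N \ge n \ge 1$, and let $\chi: \mathbb{R}^N \to \mathbb{C}$ be continuous and totally antisymmetric. Let $x_1 < x_1' < \cdots < x_n < x_n'$ be points of $V$ and set $I_+ = [x_1,x_1'] \cup \cdots \cup [x_n,x_n']$. Define $\chi^a = A_\kappa\, B\, \chi$ and the statistics constant $C_+ = A_{-\kappa}(x_1',\dots,x_n')\, B(x_1',\dots,x_n')\, A_\kappa(x_1,\dots,x_n)\, B(x_1,\dots,x_n)$. Then $\int_{V^{N-n}} \overline{\chi^a(z_1,\dots,z_{N-n}, x_1',\dots,x_n')}\, \chi^a(z_1,\dots,z_{N-n}, x_1,\dots,x_n)\, dz = C_+ \sum_{j=0}^{N-n} (-1)^j (1 + e^{i\pi\kappa})^j \binom{N-n}{j} \int_{I_+^{\,j}} dw \int_{V^{N-n-j}} dz\, \overline{\chi(w_1,\dots,w_j, z_1,\dots,z_{N-n-j}, x_1',\dots,x_n')}\, \chi(w_1,\dots,w_j, z_1,\dots,z_{N-n-j}, x_1,\dots,x_n)$.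 -/

import Mathlib

/-!
Write `c = 1 + e^{iπκ}` and `I₊ = ⋃ₗ [xₗ, xₗ']`. Both statistics factors are products over pairs
of particles, so in `conj χᵃ(z, x') χᵃ(z, x)` the pairs inside `z` cancel (`A_{-κ}(z) A_κ(z) = 1`,
`B(z)² = 1` for distinct coordinates, and `χ` vanishes otherwise), the pairs inside `x` and `x'`
give `C₊`, and the pairs `(zᵢ, xₗ), (zᵢ, xₗ')` combine to `1` if `zᵢ ∉ [xₗ, xₗ']` and to
`-e^{iπκ}` if `zᵢ ∈ (xₗ, xₗ')`. As the intervals are disjoint, the integrand is a.e.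
`C₊ ∏ᵢ (1 - c 1_{I₊}(zᵢ)) conj χ(z, x') χ(z, x)`. Expanding the product over subsets `S` and using
that `conj χ(z, x') χ(z, x)` is symmetric in `z`, the integral over `{zᵢ ∈ I₊ for i ∈ S}` depends
only on `#S`, which produces the binomial coefficients.
-/

open MeasureTheory

/-- The statistics factor `A_κ(z₁,…,z_N) = exp(iπκ ∑_{j<k} ε(z_j - z_k)/2)`. -/
noncomputable def Afac (κ : ℝ) {N : ℕ} (z : Fin N → ℝ) : ℂ :=
  Complex.exp (Complex.I * Real.pi * κ *
    (∑ j : Fin N, ∑ k ∈ Finset.univ.filter (fun k => j < k), Real.sign (z j - z k)) / 2)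

/-- The statistics factor `B(z₁,…,z_N) = ∏_{j>k} ε(z_j - z_k)`. -/
noncomputable def Bfac {N : ℕ} (z : Fin N → ℝ) : ℝ :=
  ∏ j : Fin N, ∏ k ∈ Finset.univ.filter (fun k => k < j), Real.sign (z j - z k)

open Function Complex

theorem Afac_append (κ : ℝ) {m n : ℕ} (z : Fin m → ℝ) (y : Fin n → ℝ) :
    Afac κ (Fin.append z y) = Afac κ z * Afac κ y *
      ∏ i, ∏ l, exp (I * Real.pi * κ * Real.sign (z i - y l) / 2) := by
  simp only [Afac, Finset.sum_filter, Fin.sum_univ_add, Fin.append_left, Fin.append_right,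
    Fin.lt_def, Fin.val_castAdd, Fin.val_natAdd, add_lt_add_iff_left, ← exp_sum, ← exp_add]
  congr 1
  have hlt : ∀ (i : Fin m) (l : Fin n), (i : ℕ) < m + l := fun i l => by omega
  have hnlt : ∀ (i : Fin m) (l : Fin n), ¬ m + (l : ℕ) < i := fun i l => by omega
  simp only [hlt, hnlt, if_true, if_false, Finset.sum_const_zero, push_cast,
    Finset.sum_add_distrib, ← Finset.sum_div, ← Finset.mul_sum]
  ring

theorem Bfac_append {m n : ℕ} (z : Fin m → ℝ) (y : Fin n → ℝ) :
    Bfac (Fin.append z y) = Bfac z * Bfac y * ∏ i, ∏ l, Real.sign (y l - z i) := by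
  simp only [Bfac, Finset.prod_filter, Fin.prod_univ_add, Fin.append_left, Fin.append_right,
    Fin.lt_def, Fin.val_castAdd, Fin.val_natAdd, add_lt_add_iff_left]
  have hlt : ∀ (i : Fin m) (l : Fin n), (i : ℕ) < m + l := fun i l => by omega
  have hnlt : ∀ (i : Fin m) (l : Fin n), ¬ m + (l : ℕ) < i := fun i l => by omega
  simp only [hlt, hnlt, if_true, if_false, Finset.prod_const_one, mul_one,
    Finset.prod_mul_distrib]
  rw [Finset.prod_comm (s := Finset.univ (α := Fin n)) (t := Finset.univ (α := Fin m))]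
  ring

theorem conj_Afac (κ : ℝ) {N : ℕ} (z : Fin N → ℝ) :
    (starRingEnd ℂ) (Afac κ z) = Afac (-κ) z := by
  rw [Afac, Afac, ← exp_conj]
  congr 1
  simp only [map_div₀, map_mul, map_ofNat, conj_I, conj_ofReal]
  push_cast
  ring

theorem Afac_neg_mul_Afac (κ : ℝ) {N : ℕ} (z : Fin N → ℝ) : Afac (-κ) z * Afac κ z = 1 := by
  rw [Afac, Afac, ← exp_add, ← exp_zero]
  congr 1
  push_cast
  ring

theorem Bfac_mul_self_of_injective {N : ℕ} {z : Fin N → ℝ} (hz : Injective z) :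
    Bfac z * Bfac z = 1 := by
  simp only [Bfac, ← Finset.prod_mul_distrib]
  refine Finset.prod_eq_one fun j _ => Finset.prod_eq_one fun k hk => ?_
  have hne : z j - z k ≠ 0 := sub_ne_zero.2 (hz.ne (Finset.mem_filter.1 hk).2.ne')
  rcases hne.lt_or_gt with h | h <;> simp [Real.sign_of_neg, Real.sign_of_pos, h]

/-- The contribution of the pairs `(t, a)` and `(t, b)` to `conj χᵃ(…, t, …, b) χᵃ(…, t, …, a)`. -/
theorem exchange_phase_eq (κ : ℝ) {a b t : ℝ} (hab : a ≤ b) (ha : t ≠ a) (hb : t ≠ b) :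
    exp (I * Real.pi * ↑(-κ) * Real.sign (t - b) / 2) *
        exp (I * Real.pi * κ * Real.sign (t - a) / 2) * ↑(Real.sign (b - t) * Real.sign (a - t))
      = 1 - (1 + exp (I * Real.pi * κ)) * (Set.Icc a b).indicator 1 t := by
  rcases ha.lt_or_gt with hta | hat
  · rw [Set.indicator_of_notMem fun h => hta.not_ge h.1, Real.sign_of_neg (by linarith),
      Real.sign_of_neg (by linarith), Real.sign_of_pos (by linarith),
      Real.sign_of_pos (by linarith), ← exp_add]
    push_cast
    ring_nf
    simp
  rcases hb.lt_or_gt with htb | hbt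
  · rw [Set.indicator_of_mem (show t ∈ Set.Icc a b from ⟨hat.le, htb.le⟩),
      Real.sign_of_neg (by linarith), Real.sign_of_pos (by linarith),
      Real.sign_of_pos (by linarith), Real.sign_of_neg (by linarith), ← exp_add, Pi.one_apply]
    push_cast
    ring_nf
  · rw [Set.indicator_of_notMem fun h => hbt.not_ge h.2, Real.sign_of_pos (by linarith),
      Real.sign_of_pos (by linarith), Real.sign_of_neg (by linarith),
      Real.sign_of_neg (by linarith), ← exp_add]
    push_cast
    ring_nf
    simp

theorem prod_one_sub_mul_indicator_iUnion {ι α R : Type*} [Fintype ι] [CommRing R]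
    {s : ι → Set α} (hs : Pairwise (Disjoint on s)) (c : R) (t : α) :
    ∏ i, (1 - c * (s i).indicator 1 t) = 1 - c * (⋃ i, s i).indicator 1 t := by
  by_cases ht : t ∈ ⋃ i, s i
  · obtain ⟨i₀, hi₀⟩ := Set.mem_iUnion.1 ht
    rw [Finset.prod_eq_single i₀ (fun i _ hi => ?_) (by simp), Set.indicator_of_mem hi₀,
      Set.indicator_of_mem ht]
    rw [Set.indicator_of_notMem fun h => Set.disjoint_left.1 (hs hi) h hi₀]
    simp
  · rw [Set.indicator_of_notMem ht, Finset.prod_eq_one fun i _ => ?_]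
    · simp
    rw [Set.indicator_of_notMem fun h => ht (Set.mem_iUnion.2 ⟨i, h⟩)]
    simp

theorem pairwise_disjoint_Icc_of_lt {ι α : Type*} [LinearOrder ι] [Preorder α] {x x' : ι → α}
    (hchain : ∀ j k, j < k → x' j < x k) :
    Pairwise (Disjoint on fun l => Set.Icc (x l) (x' l)) := by
  have hlt : ∀ j k, j < k → Disjoint (Set.Icc (x j) (x' j)) (Set.Icc (x k) (x' k)) :=
    fun j k hjk => Set.disjoint_left.2 fun t hj hk =>
      (hj.2.trans_lt ((hchain j k hjk).trans_le hk.1)).false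
  intro j k hjk
  rcases hjk.lt_or_gt with h | h
  exacts [hlt j k h, (hlt k j h).symm]

theorem eq_zero_of_not_injective_of_antisymm {ι α R : Type*} [Fintype ι] [DecidableEq ι] [Ring R]
    [NoZeroDivisors R] [CharZero R] {χ : (ι → α) → R}
    (hanti : ∀ (π : Equiv.Perm ι) z, χ (z ∘ π) = ((Equiv.Perm.sign π : ℤ) : R) * χ z)
    {w : ι → α} (hw : ¬ Injective w) : χ w = 0 := by
  obtain ⟨i, j, hij, hne⟩ : ∃ i j, w i = w j ∧ i ≠ j := by
    simpa [Injective] using hw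
  have hswap : w ∘ Equiv.swap i j = w := by
    funext k
    rcases eq_or_ne k i with rfl | hki
    · simp [hij]
    rcases eq_or_ne k j with rfl | hkj
    · simp [hij]
    · simp [Equiv.swap_apply_of_ne_of_ne hki hkj]
  have h := hanti (Equiv.swap i j) w
  rw [hswap, Equiv.Perm.sign_swap hne] at h
  simpa [← self_eq_neg] using h

theorem Fin.append_comp_permCongr_sumCongr {α : Type*} {m n : ℕ} (z : Fin m → α)
    (y : Fin n → α) (σ : Equiv.Perm (Fin m)) :
    Fin.append z y ∘ finSumFinEquiv.permCongr (σ.sumCongr 1) = Fin.append (z ∘ σ) y := by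
  funext k
  refine Fin.addCases (fun i => ?_) (fun l => ?_) k <;> simp [Equiv.permCongr_apply]

theorem conj_mul_append_comp_perm {α : Type*} {m n : ℕ} {χ : (Fin (m + n) → α) → ℂ}
    (hanti : ∀ (π : Equiv.Perm (Fin (m + n))) z, χ (z ∘ π) = ((Equiv.Perm.sign π : ℤ) : ℂ) * χ z)
    (y y' : Fin n → α) (σ : Equiv.Perm (Fin m)) (z : Fin m → α) :
    (starRingEnd ℂ) (χ (Fin.append (z ∘ σ) y')) * χ (Fin.append (z ∘ σ) y)
      = (starRingEnd ℂ) (χ (Fin.append z y')) * χ (Fin.append z y) := by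
  set π : Equiv.Perm (Fin (m + n)) := finSumFinEquiv.permCongr (σ.sumCongr 1)
  have hsign : ((Equiv.Perm.sign π : ℤ) : ℂ) * ((Equiv.Perm.sign π : ℤ) : ℂ) = 1 := by
    rw [← Int.cast_mul, ← Units.val_mul, Int.units_mul_self]
    simp
  rw [← Fin.append_comp_permCongr_sumCongr, ← Fin.append_comp_permCongr_sumCongr, hanti, hanti,
    map_mul, map_intCast]
  linear_combination ((starRingEnd ℂ) (χ (Fin.append z y')) * χ (Fin.append z y)) * hsign

theorem anyon_integrand_eq (κ : ℝ) {m n : ℕ} {χ : (Fin (m + n) → ℝ) → ℂ}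
    (hanti : ∀ (π : Equiv.Perm (Fin (m + n))) z, χ (z ∘ π) = ((Equiv.Perm.sign π : ℤ) : ℂ) * χ z)
    {x x' : Fin n → ℝ} (hxx' : ∀ l, x l ≤ x' l)
    (hdisj : Pairwise (Disjoint on fun l => Set.Icc (x l) (x' l)))
    {z : Fin m → ℝ} (hzx : ∀ i l, z i ≠ x l) (hzx' : ∀ i l, z i ≠ x' l) :
    (starRingEnd ℂ) (Afac κ (Fin.append z x') * (Bfac (Fin.append z x') : ℂ) *
        χ (Fin.append z x')) *
      (Afac κ (Fin.append z x) * (Bfac (Fin.append z x) : ℂ) * χ (Fin.append z x))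
    = (Afac (-κ) x' * (Bfac x' : ℂ) * (Afac κ x * (Bfac x : ℂ))) *
        ((∏ i, (1 - (1 + exp (I * Real.pi * κ)) *
            (⋃ l, Set.Icc (x l) (x' l)).indicator 1 (z i))) *
          ((starRingEnd ℂ) (χ (Fin.append z x')) * χ (Fin.append z x))) := by
  by_cases hz : Injective z
  swap
  · have hzero : ∀ y : Fin n → ℝ, χ (Fin.append z y) = 0 := fun y =>
      eq_zero_of_not_injective_of_antisymm hanti fun h => hz fun i j hij => by
        simpa using h (a₁ := Fin.castAdd n i) (a₂ := Fin.castAdd n j) (by simpa using hij)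
    simp [hzero]
  have hA : (starRingEnd ℂ) (Afac κ (Fin.append z x')) * Afac κ (Fin.append z x)
      = Afac (-κ) x' * Afac κ x *
          ∏ i, ∏ l, (exp (I * Real.pi * ↑(-κ) * Real.sign (z i - x' l) / 2) *
            exp (I * Real.pi * κ * Real.sign (z i - x l) / 2)) := by
    rw [conj_Afac, Afac_append, Afac_append]
    simp only [Finset.prod_mul_distrib]
    linear_combination (Afac (-κ) x' * Afac κ x *
      (∏ i, ∏ l, exp (I * Real.pi * ↑(-κ) * Real.sign (z i - x' l) / 2)) *
      ∏ i, ∏ l, exp (I * Real.pi * κ * Real.sign (z i - x l) / 2)) * Afac_neg_mul_Afac κ z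
  have hB : Bfac (Fin.append z x') * Bfac (Fin.append z x)
      = Bfac x' * Bfac x * ∏ i, ∏ l, (Real.sign (x' l - z i) * Real.sign (x l - z i)) := by
    rw [Bfac_append, Bfac_append]
    simp only [Finset.prod_mul_distrib]
    linear_combination (Bfac x' * Bfac x * (∏ i, ∏ l, Real.sign (x' l - z i)) *
      ∏ i, ∏ l, Real.sign (x l - z i)) * Bfac_mul_self_of_injective hz
  have hexchange : ∀ i, ∏ l, (exp (I * Real.pi * ↑(-κ) * Real.sign (z i - x' l) / 2) *
        exp (I * Real.pi * κ * Real.sign (z i - x l) / 2) *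
        ↑(Real.sign (x' l - z i) * Real.sign (x l - z i)))
      = 1 - (1 + exp (I * Real.pi * κ)) * (⋃ l, Set.Icc (x l) (x' l)).indicator 1 (z i) :=
    fun i => by
      simp only [exchange_phase_eq κ (hxx' _) (hzx i _) (hzx' i _)]
      exact prod_one_sub_mul_indicator_iUnion hdisj _ _
  calc _ = ((starRingEnd ℂ) (Afac κ (Fin.append z x')) * Afac κ (Fin.append z x)) *
        ↑(Bfac (Fin.append z x') * Bfac (Fin.append z x)) *
        ((starRingEnd ℂ) (χ (Fin.append z x')) * χ (Fin.append z x)) := by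
        simp only [map_mul, conj_ofReal]
        push_cast
        ring
    _ = _ := by
        rw [hA, hB, ← Finset.prod_congr rfl fun i _ => hexchange i]
        push_cast
        simp only [Finset.prod_mul_distrib]
        ring

theorem ae_forall_apply_ne {ι κ α : Type*} [Fintype ι] [Countable κ] [MeasureSpace α]
    [SigmaFinite (volume : Measure α)] [NullSingletonClass (volume : Measure α)] (p : κ → α) :
    ∀ᵐ z : ι → α, ∀ i k, z i ≠ p k := by
  simp only [ae_all_iff]
  intro i k
  simpa [← volume_pi] using Measure.ae_eval_ne (fun _ : ι => (volume : Measure α)) i (p k)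

theorem univ_pi_inter_pi_eq_univ_pi_ite {ι α : Type*} [DecidableEq ι] {V I : Set α}
    (hIV : I ⊆ V) (S : Finset ι) :
    Set.univ.pi (fun _ : ι => V) ∩ (S : Set ι).pi (fun _ => I)
      = Set.univ.pi (fun i => if i ∈ S then I else V) := by
  ext z
  simp only [Set.mem_inter_iff, Set.mem_pi, Set.mem_univ, true_implies, Finset.mem_coe]
  refine ⟨fun h i => ?_, fun h => ⟨fun i => ?_, fun i hi => by simpa [hi] using h i⟩⟩
  · split_ifs with hi
    exacts [h.2 i hi, h.1 i]
  · have := h i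
    split_ifs at this
    exacts [hIV this, this]

theorem integral_prod_one_sub_mul_indicator {ι α 𝕜 : Type*} [Fintype ι] [DecidableEq ι]
    [MeasurableSpace α] [RCLike 𝕜] {μ : Measure (ι → α)} {V I : Set α} (hIV : I ⊆ V)
    (hI : MeasurableSet I) {g : (ι → α) → 𝕜} (hg : IntegrableOn g (Set.univ.pi fun _ => V) μ)
    (c : 𝕜) :
    ∫ z in Set.univ.pi (fun _ => V), (∏ i, (1 - c * I.indicator 1 (z i))) * g z ∂μ
      = ∑ S ∈ Finset.univ.powerset,
          (-c) ^ S.card * ∫ z in Set.univ.pi (fun i => if i ∈ S then I else V), g z ∂μ := by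
  have hSI : ∀ S : Finset ι, MeasurableSet ((S : Set ι).pi fun _ => I) :=
    fun S => MeasurableSet.pi S.countable_toSet fun _ _ => hI
  have hexpand : ∀ z, (∏ i, (1 - c * I.indicator 1 (z i))) * g z
      = ∑ S ∈ (Finset.univ : Finset ι).powerset,
          (-c) ^ S.card * ((S : Set ι).pi fun _ => I).indicator g z := by
    intro z
    simp only [sub_eq_add_neg, ← neg_mul, Finset.prod_one_add, Finset.sum_mul,
      Finset.prod_mul_distrib, Finset.prod_const, mul_assoc]
    refine Finset.sum_congr rfl fun S _ => ?_
    rw [← Set.indicator_pi_one_apply, ← Set.indicator_mul_left]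
    simp only [Pi.one_apply, one_mul]
  simp only [hexpand]
  rw [integral_finsetSum _ fun S _ => (hg.indicator (hSI S)).const_mul _]
  refine Finset.sum_congr rfl fun S _ => ?_
  rw [integral_const_mul, setIntegral_indicator (hSI S), univ_pi_inter_pi_eq_univ_pi_ite hIV]

theorem setIntegral_univ_pi_comp_perm {ι α E : Type*} [Fintype ι] [MeasureSpace α]
    [SigmaFinite (volume : Measure α)] [NormedAddCommGroup E] [NormedSpace ℝ E]
    {g : (ι → α) → E} (hg : ∀ (σ : Equiv.Perm ι) z, g (z ∘ σ) = g z)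
    (σ : Equiv.Perm ι) (s : ι → Set α) :
    ∫ z in Set.univ.pi (s ∘ σ), g z = ∫ z in Set.univ.pi s, g z := by
  let Φ := MeasurableEquiv.arrowCongr' σ (MeasurableEquiv.refl α)
  have hΦ : MeasurePreserving Φ volume volume :=
    volume_preserving_arrowCongr' _ _ (MeasurePreserving.id _)
  have hΦz : ∀ z, Φ z = z ∘ σ.symm := fun z => rfl
  have hpre : Φ ⁻¹' Set.univ.pi s = Set.univ.pi (s ∘ σ) := by
    ext z
    simp only [Set.mem_preimage, hΦz, Set.mem_univ_pi, comp_apply]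
    exact (σ.forall_congr_right (q := fun i => z (σ.symm i) ∈ s i)).symm.trans (by simp)
  calc ∫ z in Set.univ.pi (s ∘ σ), g z = ∫ z in Φ ⁻¹' Set.univ.pi s, g (Φ z) := by
        simp only [hpre, hΦz, hg]
    _ = ∫ z in Set.univ.pi s, g z := hΦ.setIntegral_preimage_emb Φ.measurableEmbedding g _

theorem Finset.exists_perm_mem_iff_of_card_eq {α : Type*} [Fintype α] [DecidableEq α]
    {S T : Finset α} (h : S.card = T.card) : ∃ σ : Equiv.Perm α, ∀ i, σ i ∈ T ↔ i ∈ S := by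
  let e : {i // i ∈ S} ≃ {i // i ∈ T} := Fintype.equivOfCardEq (by simpa using h)
  refine ⟨e.extendSubtype, fun i => ⟨fun hi => ?_, e.extendSubtype_mem i⟩⟩
  by_contra hiS
  exact e.extendSubtype_not_mem i hiS hi

theorem Fin.exists_perm_val_lt_card_iff_mem {m : ℕ} (S : Finset (Fin m)) :
    ∃ σ : Equiv.Perm (Fin m), ∀ i, (σ i : ℕ) < S.card ↔ i ∈ S := by
  have hS : S.card ≤ m := by simpa using S.card_le_univ
  obtain ⟨σ, hσ⟩ := Finset.exists_perm_mem_iff_of_card_eq (S := S)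
    (T := Finset.univ.filter fun i : Fin m => (i : ℕ) < S.card)
    (by rw [Fin.card_filter_val_lt, min_eq_right hS])
  exact ⟨σ, fun i => by simpa using hσ i⟩

theorem setIntegral_univ_pi_ite_mem_eq_ite_lt_card {m : ℕ} {α E : Type*} [MeasureSpace α]
    [SigmaFinite (volume : Measure α)] [NormedAddCommGroup E] [NormedSpace ℝ E]
    {g : (Fin m → α) → E} (hg : ∀ (σ : Equiv.Perm (Fin m)) z, g (z ∘ σ) = g z)
    (S : Finset (Fin m)) (I V : Set α) :
    ∫ z in Set.univ.pi (fun i => if i ∈ S then I else V), g z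
      = ∫ z in Set.univ.pi (fun i : Fin m => if (i : ℕ) < S.card then I else V), g z := by
  obtain ⟨σ, hσ⟩ := Fin.exists_perm_val_lt_card_iff_mem S
  rw [← setIntegral_univ_pi_comp_perm hg σ (fun i => if (i : ℕ) < S.card then I else V)]
  simp only [comp_def, hσ]

theorem sum_powerset_mul_setIntegral_univ_pi_ite {m : ℕ} {α 𝕜 : Type*} [MeasureSpace α]
    [SigmaFinite (volume : Measure α)] [RCLike 𝕜] {g : (Fin m → α) → 𝕜}
    (hg : ∀ (σ : Equiv.Perm (Fin m)) z, g (z ∘ σ) = g z) (a : ℕ → 𝕜) (I V : Set α) :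
    ∑ S ∈ Finset.univ.powerset,
        a S.card * ∫ z in Set.univ.pi (fun i => if i ∈ S then I else V), g z
      = ∑ j ∈ Finset.range (m + 1), (m.choose j : 𝕜) *
          (a j * ∫ z in Set.univ.pi (fun i : Fin m => if (i : ℕ) < j then I else V), g z) := by
  simp only [setIntegral_univ_pi_ite_mem_eq_ite_lt_card hg]
  rw [Finset.sum_powerset_apply_card
    (fun j => a j * ∫ z in Set.univ.pi (fun i : Fin m => if (i : ℕ) < j then I else V), g z)]
  simp [nsmul_eq_mul]

theorem anyon_fermi_rdm_plus_general (κ L : ℝ) (m n : ℕ)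
    (χ : (Fin (m + n) → ℝ) → ℂ) (hcont : Continuous χ)
    (hanti : ∀ (π : Equiv.Perm (Fin (m + n))) (z : Fin (m + n) → ℝ),
      χ (z ∘ π) = ((Equiv.Perm.sign π : ℤ) : ℂ) * χ z)
    (x x' : Fin n → ℝ)
    (hxV : ∀ j, x j ∈ Set.Icc (-(L / 2)) (L / 2))
    (hx'V : ∀ j, x' j ∈ Set.Icc (-(L / 2)) (L / 2))
    (hxx' : ∀ j, x j < x' j) (hchain : ∀ j k : Fin n, j < k → x' j < x k) :
    (∫ z in Set.univ.pi (fun _ : Fin m => Set.Icc (-(L / 2)) (L / 2)),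
        (starRingEnd ℂ) (Afac κ (Fin.append z x') * (Bfac (Fin.append z x') : ℂ) *
            χ (Fin.append z x')) *
          (Afac κ (Fin.append z x) * (Bfac (Fin.append z x) : ℂ) * χ (Fin.append z x)))
      = (Afac (-κ) x' * (Bfac x' : ℂ) * (Afac κ x * (Bfac x : ℂ))) *
          ∑ j ∈ Finset.range (m + 1),
            (-1) ^ j * (1 + Complex.exp (Complex.I * Real.pi * κ)) ^ j * (m.choose j : ℂ) *
              ∫ z in Set.univ.pi (fun i : Fin m =>
                  if (i : ℕ) < j then ⋃ l, Set.Icc (x l) (x' l)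
                  else Set.Icc (-(L / 2)) (L / 2)),
                (starRingEnd ℂ) (χ (Fin.append z x')) * χ (Fin.append z x) := by
  have hIV : ⋃ l, Set.Icc (x l) (x' l) ⊆ Set.Icc (-(L / 2)) (L / 2) :=
    Set.iUnion_subset fun l => Set.Icc_subset_Icc (hxV l).1 (hx'V l).2
  have happend : ∀ y : Fin n → ℝ, Continuous fun z : Fin m → ℝ => Fin.append z y := fun y =>
    (Fin.continuous_append m n).comp (continuous_id.prodMk continuous_const)
  have hint : IntegrableOn (fun z => (starRingEnd ℂ) (χ (Fin.append z x')) * χ (Fin.append z x))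
      (Set.univ.pi fun _ : Fin m => Set.Icc (-(L / 2)) (L / 2)) :=
    ((continuous_conj.comp (hcont.comp (happend x'))).mul
      (hcont.comp (happend x))).continuousOn.integrableOn_compact
      (isCompact_univ_pi fun _ => isCompact_Icc)
  rw [setIntegral_congr_ae (MeasurableSet.univ_pi fun _ => measurableSet_Icc) (by
      filter_upwards [ae_forall_apply_ne x, ae_forall_apply_ne x'] with z hzx hzx' _
      exact anyon_integrand_eq κ hanti (fun l => (hxx' l).le)
        (pairwise_disjoint_Icc_of_lt hchain) hzx hzx'),
    integral_const_mul, integral_prod_one_sub_mul_indicator hIV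
      (MeasurableSet.iUnion fun _ => measurableSet_Icc) hint,
    sum_powerset_mul_setIntegral_univ_pi_ite (conj_mul_append_comp_perm hanti x x')]
  refine congrArg _ (Finset.sum_congr rfl fun j _ => ?_)
  rw [neg_pow]
  ring

/-- Anyon–Fermi expansion of the `n`-particle reduced density matrix, ordering `O₊`
(`x₁ < x₁' < ⋯ < xₙ < xₙ'`, `I₊ = ⋃ₗ [xₗ, xₗ']`), with `N = m + n` particles on
`V = [-L/2, L/2]` and `χᵃ = A_κ B χ` for a continuous totally antisymmetric `χ`. -/
theorem anyon_fermi_rdm_plus (κ L : ℝ) (hL : 0 < L) (m n : ℕ) (hn : 1 ≤ n)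
    (χ : (Fin (m + n) → ℝ) → ℂ) (hcont : Continuous χ)
    (hanti : ∀ (π : Equiv.Perm (Fin (m + n))) (z : Fin (m + n) → ℝ),
      χ (z ∘ π) = ((Equiv.Perm.sign π : ℤ) : ℂ) * χ z)
    (x x' : Fin n → ℝ)
    (hxV : ∀ j, x j ∈ Set.Icc (-(L / 2)) (L / 2))
    (hx'V : ∀ j, x' j ∈ Set.Icc (-(L / 2)) (L / 2))
    (hxx' : ∀ j, x j < x' j) (hchain : ∀ j k : Fin n, j < k → x' j < x k) :
    (∫ z in Set.univ.pi (fun _ : Fin m => Set.Icc (-(L / 2)) (L / 2)),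
        (starRingEnd ℂ) (Afac κ (Fin.append z x') * (Bfac (Fin.append z x') : ℂ) *
            χ (Fin.append z x')) *
          (Afac κ (Fin.append z x) * (Bfac (Fin.append z x) : ℂ) * χ (Fin.append z x)))
      = (Afac (-κ) x' * (Bfac x' : ℂ) * (Afac κ x * (Bfac x : ℂ))) *
          ∑ j ∈ Finset.range (m + 1),
            (-1) ^ j * (1 + Complex.exp (Complex.I * Real.pi * κ)) ^ j * (m.choose j : ℂ) *
              ∫ z in Set.univ.pi (fun i : Fin m =>
                  if (i : ℕ) < j then ⋃ l, Set.Icc (x l) (x' l)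
                  else Set.Icc (-(L / 2)) (L / 2)),
                (starRingEnd ℂ) (χ (Fin.append z x')) * χ (Fin.append z x) :=
  anyon_fermi_rdm_plus_general κ L m n χ hcont hanti x x' hxV hx'V hxx' hchain
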